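/- arXiv:2507.07329 — 3 statements merged into one kernel-verified Lean document; each statement's English description precedes it below -/
import Mathlib

section
/- Let K be the complexification of a commutative fusion ring generated by a single simple basis element x (every basis element is a constituent of some power of x). Then Z(x) := {characters μ : |μ(x)| = FPdim(x)} equals the group G of group-like characters. -/
open scoped BigOperators

/-- A commutative fusion ring: nonnegative integer fusion coefficients on a basis
`x_0, ..., x_m` (`x_0` the unit), a duality involution, and Frobenius-Perron
dimensions `d i > 0`. -/
structure FusionData (m : ℕ) where
  N : Fin (m + 1) → Fin (m + 1) → Fin (m + 1) → ℕ
  dual : Fin (m + 1) → Fin (m + 1)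
  dual_invol : ∀ i, dual (dual i) = i
  N_comm : ∀ i j k, N i j k = N j i k
  N_assoc : ∀ i j l k, ∑ t, N i j t * N t l k = ∑ t, N j l t * N i t k
  N_one : ∀ j k, N 0 j k = if k = j then 1 else 0
  N_pair : ∀ i j, N i j 0 = if j = dual i then 1 else 0
  d : Fin (m + 1) → ℝ
  d_pos : ∀ i, 0 < d i
  d_one : d 0 = 1
  d_mul : ∀ i j, d i * d j = ∑ k, (N i j k : ℝ) * d k
  d_dual : ∀ i, d (dual i) = d i

/-- A character of the complexified fusion ring, given by its values on the basis. -/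
def IsChar {m : ℕ} (F : FusionData m) (μ : Fin (m + 1) → ℂ) : Prop :=
  μ 0 = 1 ∧
  (∀ i j, μ i * μ j = ∑ k, (F.N i j k : ℂ) * μ k) ∧
  (∀ i, μ (F.dual i) = starRingEnd ℂ (μ i)) ∧
  (∀ i, ‖μ i‖ ≤ F.d i)

/-- The dual `⋆` product: `(μ ⋆ ν)(x_k / d_k) = μ(x_k / d_k) · ν(x_k / d_k)`. -/
noncomputable def starProd {m : ℕ} (F : FusionData m) (μ ν : Fin (m + 1) → ℂ) :
    Fin (m + 1) → ℂ :=
  fun i => μ i * ν i / (F.d i : ℂ)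

/-- A group-like character: `μ ⋆ μ# = μ_0 = FPdim`, where `μ#` is the complex
conjugate character. -/
def IsGroupLike {m : ℕ} (F : FusionData m) (μ : Fin (m + 1) → ℂ) : Prop :=
  IsChar F μ ∧ ∀ i, starProd F μ (fun k => starRingEnd ℂ (μ k)) i = (F.d i : ℂ)

/-- The coefficient of the basis element `x_k` in the `n`-th power of `x_a`. -/
def powCoeff {m : ℕ} (F : FusionData m) (a : Fin (m + 1)) : ℕ → Fin (m + 1) → ℕ
  | 0, k => if k = 0 then 1 else 0
  | n + 1, k => ∑ l, powCoeff F a n l * F.N a l k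

theorem FusionData.pow_eq_sum_powCoeff_mul {m : ℕ} (F : FusionData m) {R : Type*}
    [CommSemiring R] {f : Fin (m + 1) → R} (h0 : f 0 = 1)
    (hmul : ∀ i j, f i * f j = ∑ k, (F.N i j k : R) * f k) (a : Fin (m + 1)) (n : ℕ) :
    f a ^ n = ∑ k, (powCoeff F a n k : R) * f k := by
  induction n with
  | zero => simp [powCoeff, h0]
  | succ n ih =>
    calc f a ^ (n + 1) = ∑ l, (powCoeff F a n l : R) * (f a * f l) := by
          rw [pow_succ', ih, Finset.mul_sum]
          exact Finset.sum_congr rfl fun l _ => mul_left_comm _ _ _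
      _ = ∑ l, ∑ k, (powCoeff F a n l : R) * F.N a l k * f k := by
          simp only [hmul, Finset.mul_sum, mul_assoc]
      _ = ∑ k, (powCoeff F a (n + 1) k : R) * f k := by
          rw [Finset.sum_comm]
          simp [powCoeff, Finset.sum_mul]

/-- With `x^n = ∑ c_k x_k`, the chain
`FPdim(x)^n = |μ(x^n)| ≤ ∑ c_k |μ(x_k)| ≤ ∑ c_k FPdim(x_k) = FPdim(x)^n` is tight, so the last
step forces `|μ(x_k)| = FPdim(x_k)` wherever `c_k ≠ 0`. -/
theorem IsChar.norm_eq_d_of_powCoeff_ne_zero {m : ℕ} {F : FusionData m}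
    {μ : Fin (m + 1) → ℂ} (hμ : IsChar F μ) {a : Fin (m + 1)} (ha : ‖μ a‖ = F.d a)
    {n : ℕ} {k : Fin (m + 1)} (hk : powCoeff F a n k ≠ 0) : ‖μ k‖ = F.d k := by
  obtain ⟨h0, hmul, -, hle⟩ := hμ
  refine (hle k).eq_of_not_lt fun hlt => ?_
  have hstrict : ∑ j, (powCoeff F a n j : ℝ) * ‖μ j‖ < ∑ j, (powCoeff F a n j : ℝ) * F.d j :=
    Finset.sum_lt_sum (fun j _ => by gcongr; exact hle j)
      ⟨k, Finset.mem_univ k, by gcongr⟩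
  have htriangle : F.d a ^ n ≤ ∑ j, (powCoeff F a n j : ℝ) * ‖μ j‖ :=
    calc F.d a ^ n = ‖∑ j, (powCoeff F a n j : ℂ) * μ j‖ := by
          rw [← F.pow_eq_sum_powCoeff_mul h0 hmul, norm_pow, ha]
      _ ≤ ∑ j, (powCoeff F a n j : ℝ) * ‖μ j‖ := by
          refine (norm_sum_le _ _).trans_eq (Finset.sum_congr rfl fun j _ => ?_)
          rw [norm_mul, Complex.norm_natCast]
  rw [← F.pow_eq_sum_powCoeff_mul F.d_one F.d_mul] at hstrict
  exact htriangle.not_gt hstrict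

theorem starProd_conj_self_eq_d_iff {m : ℕ} (F : FusionData m) (μ : Fin (m + 1) → ℂ)
    (i : Fin (m + 1)) :
    starProd F μ (fun k => starRingEnd ℂ (μ k)) i = F.d i ↔ ‖μ i‖ = F.d i := by
  have hd : (F.d i : ℂ) ≠ 0 := Complex.ofReal_ne_zero.mpr (F.d_pos i).ne'
  rw [starProd, Complex.mul_conj, ← Complex.sq_norm, div_eq_iff hd, ← sq]
  norm_cast
  exact pow_left_inj₀ (norm_nonneg _) (F.d_pos i).le two_ne_zero

theorem isGroupLike_iff {m : ℕ} (F : FusionData m) (μ : Fin (m + 1) → ℂ) :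
    IsGroupLike F μ ↔ IsChar F μ ∧ ∀ i, ‖μ i‖ = F.d i := by
  simp only [IsGroupLike, starProd_conj_self_eq_d_iff]

/-- If the fusion ring is generated by the simple basis element `x = x_a`, then
the center `Z(x) = {μ : |μ(x)| = FPdim(x)}` equals the group of group-like
characters. -/
theorem center_of_generator_eq_groupLikes {m : ℕ} (F : FusionData m)
    (a : Fin (m + 1)) (hgen : ∀ k, ∃ n, powCoeff F a n k ≠ 0) :
    {μ : Fin (m + 1) → ℂ | IsChar F μ ∧ ‖μ a‖ = F.d a} =
      {μ : Fin (m + 1) → ℂ | IsGroupLike F μ} := by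
  ext μ
  simp only [Set.mem_ofPred_eq, isGroupLike_iff]
  constructor
  · rintro ⟨hμ, ha⟩
    refine ⟨hμ, fun k => ?_⟩
    obtain ⟨n, hn⟩ := hgen k
    exact hμ.norm_eq_d_of_powCoeff_ne_zero ha hn
  · rintro ⟨hμ, hnorm⟩
    exact ⟨hμ, hnorm a⟩
end

section
/- Let K be the complexification of a commutative fusion ring generated by a simple basis element x. If a character μ_z is group-like and μ_z(x)/FPdim(x) = 1 (equivalently ω_x(μ_z) = 1), then μ_z = FPdim. In particular, the central character ω_x restricted to the group of group-like characters is injective (faithful). -/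
open scoped BigOperators

/-! A group-like character has `‖μ i‖ = d i`, so expanding `μ i * μ j = ∑ N i j k * μ k` is a
case of equality in the triangle inequality: every `μ k / d k` with `N i j k ≠ 0` equals
`(μ i / d i) * (μ j / d j)`. Hence `μ k / d k = (μ a / d a) ^ n` whenever `x_k` occurs in
`x_a ^ n`, and as `x_a` generates, `μ a / d a` determines `μ`. Since `FPdim` is itself
group-like with `ω_x = 1`, faithfulness gives the first claim. -/

open ComplexConjugate ComplexOrder

namespace Complex

theorem norm_sum_mul_eq_mul_sum_of_norm_sum_eq {ι : Type*} {s : Finset ι} {c r : ι → ℝ}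
    {z : ι → ℂ} (hc : ∀ t ∈ s, 0 ≤ c t) (hz : ∀ t ∈ s, ‖z t‖ ≤ r t)
    (hnorm : ‖∑ t ∈ s, (c t : ℂ) * z t‖ = ∑ t ∈ s, c t * r t) {k : ι} (hk : k ∈ s)
    (hck : 0 < c k) :
    ‖∑ t ∈ s, (c t : ℂ) * z t‖ * z k = r k * ∑ t ∈ s, (c t : ℂ) * z t := by
  set w := ∑ t ∈ s, (c t : ℂ) * z t
  have hbound : ∀ t ∈ s, ‖conj w * z t‖ ≤ ‖w‖ * r t := fun t ht => by
    rw [norm_mul, norm_conj]; exact mul_le_mul_of_nonneg_left (hz t ht) (norm_nonneg w)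
  -- The bounds `re (conj w * z t) ≤ ‖w‖ * r t` add up to `re (conj w * w) = ‖w‖ ^ 2`, so all are
  -- equalities, which makes `conj w * z k` a nonnegative real.
  have hle : ∀ t ∈ s, c t * (conj w * z t).re ≤ c t * (‖w‖ * r t) := fun t ht =>
    mul_le_mul_of_nonneg_left ((re_le_norm _).trans (hbound t ht)) (hc t ht)
  have hsum : ∑ t ∈ s, c t * (conj w * z t).re = ∑ t ∈ s, c t * (‖w‖ * r t) := by
    calc ∑ t ∈ s, c t * (conj w * z t).re = (conj w * w).re := by
          simp only [w, Finset.mul_sum, re_sum, mul_left_comm (conj _) (c _ : ℂ),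
            re_ofReal_mul]
      _ = ‖w‖ * ‖w‖ := by rw [mul_comm, mul_conj, ofReal_re, normSq_eq_norm_sq, sq]
      _ = ∑ t ∈ s, c t * (‖w‖ * r t) := by
          rw [hnorm, Finset.mul_sum]; exact Finset.sum_congr rfl fun t _ => by ring
  have hre : (conj w * z k).re = ‖w‖ * r k :=
    mul_left_cancel₀ hck.ne' ((Finset.sum_eq_sum_iff_of_le hle).mp hsum k hk)
  have hnonneg : 0 ≤ conj w * z k :=
    re_eq_norm.mp (le_antisymm (re_le_norm _) (hre ▸ hbound k hk))
  have hreal : conj w * z k = ((‖w‖ * r k : ℝ) : ℂ) := by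
    rw [← hre, re_eq_norm.mpr hnonneg, norm_of_nonneg' hnonneg]
  rcases eq_or_ne w 0 with hw | hw
  · simp [hw]
  · have hw' : (‖w‖ : ℂ) ≠ 0 := ofReal_ne_zero.mpr (norm_ne_zero_iff.mpr hw)
    apply mul_left_cancel₀ hw'
    have := congrArg (w * ·) hreal
    simp only [← mul_assoc, mul_conj, normSq_eq_norm_sq] at this
    push_cast at this
    linear_combination this

end Complex

section FusionCharacters

open Complex

variable {m : ℕ} {F : FusionData m} {μ ν : Fin (m + 1) → ℂ}

lemma FusionData.d_ne_zero (F : FusionData m) (i : Fin (m + 1)) : (F.d i : ℂ) ≠ 0 :=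
  ofReal_ne_zero.mpr (F.d_pos i).ne'

lemma isGroupLike_d (F : FusionData m) : IsGroupLike F fun i => (F.d i : ℂ) := by
  refine ⟨⟨by simp [F.d_one], fun i j => ?_, fun i => by simp [F.d_dual], fun i => ?_⟩,
    fun i => ?_⟩
  · simp only
    exact_mod_cast F.d_mul i j
  · rw [norm_real, Real.norm_of_nonneg (F.d_pos i).le]
  · simp only [starProd, conj_ofReal]
    field_simp [F.d_ne_zero i]

lemma IsGroupLike.norm_eq (hμ : IsGroupLike F μ) (i : Fin (m + 1)) : ‖μ i‖ = F.d i := by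
  have hsq : μ i * conj (μ i) = (F.d i : ℂ) * F.d i := by
    have := hμ.2 i
    rwa [starProd, div_eq_iff (F.d_ne_zero i)] at this
  rw [mul_conj, normSq_eq_norm_sq] at hsq
  have : ‖μ i‖ ^ 2 = F.d i ^ 2 := by exact_mod_cast hsq.trans (sq _).symm
  exact (sq_eq_sq₀ (norm_nonneg _) (F.d_pos i).le).mp this

lemma IsChar.div_d_eq_mul_of_N_ne_zero (hμ : IsChar F μ) (hnorm : ∀ i, ‖μ i‖ = F.d i)
    {i j k : Fin (m + 1)} (hN : F.N i j k ≠ 0) :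
    μ k / F.d k = μ i / F.d i * (μ j / F.d j) := by
  have hsum : μ i * μ j = ∑ t, ((F.N i j t : ℝ) : ℂ) * μ t := by
    simpa only [ofReal_natCast] using hμ.2.1 i j
  have hnorm_sum : ‖μ i * μ j‖ = ∑ t, (F.N i j t : ℝ) * F.d t := by
    rw [norm_mul, hnorm, hnorm, F.d_mul]
  rw [hsum] at hnorm_sum
  have key := norm_sum_mul_eq_mul_sum_of_norm_sum_eq (fun t _ => Nat.cast_nonneg _)
    (fun t _ => hμ.2.2.2 t) hnorm_sum (Finset.mem_univ k) (Nat.cast_pos.mpr hN.bot_lt)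
  rw [← hsum, norm_mul, hnorm, hnorm] at key
  rw [div_mul_div_comm,
    div_eq_div_iff (F.d_ne_zero k) (mul_ne_zero (F.d_ne_zero i) (F.d_ne_zero j))]
  push_cast at key
  linear_combination key

lemma IsChar.div_d_eq_pow_of_powCoeff_ne_zero (hμ : IsChar F μ) (hnorm : ∀ i, ‖μ i‖ = F.d i)
    {a k : Fin (m + 1)} {n : ℕ} (hP : powCoeff F a n k ≠ 0) :
    μ k / F.d k = (μ a / F.d a) ^ n := by
  induction n generalizing k with
  | zero =>
    obtain rfl : k = 0 := by by_contra hk; simp [powCoeff, hk] at hP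
    simp [hμ.1, F.d_one]
  | succ n ih =>
    obtain ⟨l, -, hl⟩ := Finset.exists_ne_zero_of_sum_ne_zero hP
    obtain ⟨hPl, hN⟩ := mul_ne_zero_iff.mp hl
    rw [hμ.div_d_eq_mul_of_N_ne_zero hnorm hN, ih hPl, pow_succ']

lemma IsGroupLike.eq_of_div_d_eq {a : Fin (m + 1)} (hgen : ∀ k, ∃ n, powCoeff F a n k ≠ 0)
    (hμ : IsGroupLike F μ) (hν : IsGroupLike F ν) (ha : μ a / F.d a = ν a / F.d a) :
    μ = ν := by
  funext k
  obtain ⟨n, hn⟩ := hgen k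
  have hk : μ k / F.d k = ν k / F.d k := by
    rw [hμ.1.div_d_eq_pow_of_powCoeff_ne_zero hμ.norm_eq hn,
      hν.1.div_d_eq_pow_of_powCoeff_ne_zero hν.norm_eq hn, ha]
  exact (div_left_inj' (F.d_ne_zero k)).mp hk

end FusionCharacters

/-- If the fusion ring is generated by the simple basis element `x_a` and a
group-like character `μ_z` satisfies `ω_x(μ_z) = μ_z(x)/FPdim(x) = 1`, then
`μ_z = FPdim`; in particular the central character `ω_x` is injective
(faithful) on the group of group-like characters. -/
theorem central_character_faithful {m : ℕ} (F : FusionData m)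
    (a : Fin (m + 1)) (hgen : ∀ k, ∃ n, powCoeff F a n k ≠ 0) :
    (∀ μ, IsGroupLike F μ → μ a / (F.d a : ℂ) = 1 → μ = fun i => (F.d i : ℂ)) ∧
    (∀ μ ν, IsGroupLike F μ → IsGroupLike F ν →
      μ a / (F.d a : ℂ) = ν a / (F.d a : ℂ) → μ = ν) :=
  ⟨fun _ hμ hω => hμ.eq_of_div_d_eq hgen (isGroupLike_d F) (by rw [hω, div_self (F.d_ne_zero a)]),
    fun _ _ hμ hν => hμ.eq_of_div_d_eq hgen hν⟩
end

section
/- Let C be a modular fusion category with S-matrix (S_{ij}), simple objects X_0,...,X_m with quantum dimensions d_i, and suppose C is generated by a simple object X = X_k. Using the identification of characters μ_i([X_j]) = S_{ij}/d_i and dim(C^i) = d_i², the identity dim(C)/|G| = Σ_{orbit reps i} d_i² |μ_i([X])|² transforms into dim(C)/(|G| · d_k²) = Σ_{orbit reps i} |μ_{X}([X_i])|², where μ_X([X_i]) = S_{ki}/d_k; hence dim(C)/(|U(C)| · dim(X)²) is an algebraic integer. -/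
open scoped BigOperators

/-!
Write `n_j = ∑_i |μ_j(x_i)|²`, so that `dim C = n_j d_j²` for every `j`. Symmetry of `S` gives
`μ_i(x_j) d_i = μ_j(x_i) d_j`, hence the weights `|μ_i(x_j)|² / n_i` form a symmetric matrix and
its column at `k` sums to `1`. A group-like character `z` acts on characters by `⋆` without
changing any modulus, so the weight is constant on orbits. The action is free on the characters
not vanishing at the generator `x_k`: by the equality case of the triangle inequality in
`z(x_k)^n = ∑_l c_l z(x_l)`, a group-like character is a grading and is determined by `z(x_k)`.
Summing over orbits gives `|G| ∑_{t ∈ T} |μ_t(x_k)|² / n_t = 1`, that is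
`∑_{t ∈ T} |S_{kt} / d_k|² = n_k / |G| = dim C / (|G| d_k²)`, a sum of algebraic integers.
-/

open Finset

theorem eq_mul_of_sum_eq_mul_sum_of_norm_le {ι : Type*} (s : Finset ι) {z : ι → ℂ}
    {r c : ι → ℝ} {v : ℂ} (hv : ‖v‖ = 1) (hz : ∀ l ∈ s, ‖z l‖ ≤ r l)
    (hc : ∀ l ∈ s, 0 ≤ c l)
    (hsum : ∑ l ∈ s, (c l : ℂ) * z l = v * ∑ l ∈ s, (c l : ℂ) * (r l : ℂ))
    {l : ι} (hl : l ∈ s) (hcl : c l ≠ 0) : z l = v * r l := by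
  have hvv : starRingEnd ℂ v * v = 1 := by
    rw [mul_comm, Complex.mul_conj, Complex.normSq_eq_norm_sq, hv]; norm_num
  -- rotate by `v⁻¹ = conj v`, so that the real parts of the summands must all be extremal
  set w : ι → ℂ := fun l => starRingEnd ℂ v * z l
  have hw : ∀ l ∈ s, (w l).re ≤ r l := fun l hl =>
    (Complex.re_le_norm _).trans (by simpa [w, hv] using hz l hl)
  have hwsum : ∑ l ∈ s, (c l : ℂ) * w l = ∑ l ∈ s, (c l : ℂ) * (r l : ℂ) := by
    calc ∑ l ∈ s, (c l : ℂ) * w l = starRingEnd ℂ v * ∑ l ∈ s, (c l : ℂ) * z l := by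
          rw [mul_sum]; exact sum_congr rfl fun _ _ => by ring
      _ = _ := by rw [hsum, ← mul_assoc, hvv, one_mul]
  have hre : ∑ l ∈ s, c l * (w l).re = ∑ l ∈ s, c l * r l := by
    simpa [Complex.re_sum] using congrArg Complex.re hwsum
  have hwl : (w l).re = r l := mul_left_cancel₀ hcl <|
    (sum_eq_sum_iff_of_le fun l hl => mul_le_mul_of_nonneg_left (hw l hl) (hc l hl)).1
      hre l hl
  have him : (w l).im = 0 := by
    refine Complex.abs_re_eq_norm.1 (le_antisymm (Complex.abs_re_le_norm _) ?_)
    simpa [w, hv, hwl] using (hz l hl).trans (hwl ▸ le_abs_self _)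
  calc z l = v * w l := by simp only [w]; rw [← mul_assoc, mul_comm v, hvv, one_mul]
    _ = v * r l := congrArg (v * ·) (Complex.ext (by simpa using hwl) (by simpa using him))

namespace FusionData

variable {m : ℕ} (F : FusionData m)

theorem d_ofReal_ne_zero (i : Fin (m + 1)) : (F.d i : ℂ) ≠ 0 :=
  Complex.ofReal_ne_zero.2 (F.d_pos i).ne'

theorem isChar_d : IsChar F (fun i => (F.d i : ℂ)) := by
  refine ⟨by simp [F.d_one], fun i j => by dsimp only; exact_mod_cast F.d_mul i j,
    fun i => by simp [F.d_dual], fun i => by simp [abs_of_pos (F.d_pos i)]⟩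

end FusionData

namespace IsChar

variable {m : ℕ} {F : FusionData m} {ν : Fin (m + 1) → ℂ}

theorem pow_eq_sum_powCoeff (hν : IsChar F ν) (a : Fin (m + 1)) (n : ℕ) :
    ν a ^ n = ∑ l, (powCoeff F a n l : ℂ) * ν l := by
  induction n with
  | zero => simp [powCoeff, hν.1]
  | succ n ih =>
    simp only [powCoeff, Nat.cast_sum, Nat.cast_mul, sum_mul]
    rw [pow_succ, ih, sum_mul, sum_comm]
    refine sum_congr rfl fun l _ => ?_
    rw [mul_assoc, mul_comm (ν l), hν.2.1, mul_sum]
    exact sum_congr rfl fun _ _ => by ring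

theorem eq_mul_d_of_sum_eq (hν : IsChar F ν) (c : Fin (m + 1) → ℕ) {v : ℂ} (hv : ‖v‖ = 1)
    (h : ∑ l, (c l : ℂ) * ν l = v * ∑ l, (c l : ℂ) * (F.d l : ℂ)) {l : Fin (m + 1)}
    (hl : c l ≠ 0) : ν l = v * F.d l :=
  eq_mul_of_sum_eq_mul_sum_of_norm_le univ hv (fun l _ => hν.2.2.2 l)
    (fun l _ => (c l).cast_nonneg) (by simpa using h) (mem_univ l)
    (Nat.cast_ne_zero.2 hl)

end IsChar

namespace IsGroupLike

variable {m : ℕ} {F : FusionData m} {z : Fin (m + 1) → ℂ}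

theorem mul_conj_eq (hz : IsGroupLike F z) (i : Fin (m + 1)) :
    z i * starRingEnd ℂ (z i) = (F.d i : ℂ) * F.d i :=
  (div_eq_iff (F.d_ofReal_ne_zero i)).1 (hz.2 i)

theorem norm_eq_s19 (hz : IsGroupLike F z) (i : Fin (m + 1)) : ‖z i‖ = F.d i := by
  have h := congrArg Complex.re (hz.mul_conj_eq i)
  rw [Complex.mul_conj, Complex.normSq_eq_norm_sq] at h
  exact (sq_eq_sq₀ (norm_nonneg _) (F.d_pos i).le).1 (by simpa [sq] using h)

theorem ne_zero (hz : IsGroupLike F z) (i : Fin (m + 1)) : z i ≠ 0 :=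
  norm_ne_zero_iff.1 (hz.norm_eq_s19 i ▸ (F.d_pos i).ne')

theorem starProd_ne_zero {ν : Fin (m + 1) → ℂ} (hz : IsGroupLike F z) {i : Fin (m + 1)}
    (hν : ν i ≠ 0) : starProd F z ν i ≠ 0 :=
  div_ne_zero (mul_ne_zero (hz.ne_zero i) hν) (F.d_ofReal_ne_zero i)

theorem norm_div_d (hz : IsGroupLike F z) (i : Fin (m + 1)) : ‖z i / F.d i‖ = 1 := by
  rw [norm_div, hz.norm_eq_s19, Complex.norm_real, Real.norm_of_nonneg (F.d_pos i).le,
    div_self (F.d_pos i).ne']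

theorem mul_d_eq_of_N_ne_zero (hz : IsGroupLike F z) {i j l : Fin (m + 1)}
    (hN : F.N i j l ≠ 0) : z l * (F.d i * F.d j) = z i * z j * F.d l := by
  have hi := F.d_ofReal_ne_zero i
  have hj := F.d_ofReal_ne_zero j
  have h := hz.1.eq_mul_d_of_sum_eq (F.N i j) (v := z i / F.d i * (z j / F.d j))
    (by rw [norm_mul, hz.norm_div_d, hz.norm_div_d, one_mul])
    (by rw [← hz.1.2.1, ← F.isChar_d.2.1]; field_simp) hN
  rw [h]; field_simp

theorem mul_d_pow_eq_of_powCoeff_ne_zero (hz : IsGroupLike F z) {k i : Fin (m + 1)} {n : ℕ}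
    (hP : powCoeff F k n i ≠ 0) : z i * (F.d k : ℂ) ^ n = z k ^ n * F.d i := by
  have hk := F.d_ofReal_ne_zero k
  have h := hz.1.eq_mul_d_of_sum_eq (powCoeff F k n) (v := (z k / F.d k) ^ n)
    (by rw [norm_pow, hz.norm_div_d, one_pow])
    (by rw [← hz.1.pow_eq_sum_powCoeff, ← F.isChar_d.pow_eq_sum_powCoeff, div_pow,
      div_mul_cancel₀ _ (pow_ne_zero n hk)]) hP
  rw [h, div_pow]; field_simp

theorem eq_of_apply_eq {z' : Fin (m + 1) → ℂ} (hz : IsGroupLike F z) (hz' : IsGroupLike F z')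
    {k : Fin (m + 1)} (hgen : ∀ i, ∃ n, powCoeff F k n i ≠ 0) (hk : z k = z' k) : z = z' := by
  funext i
  obtain ⟨n, hn⟩ := hgen i
  refine mul_right_cancel₀ (pow_ne_zero n (F.d_ofReal_ne_zero k)) ?_
  rw [hz.mul_d_pow_eq_of_powCoeff_ne_zero hn, hz'.mul_d_pow_eq_of_powCoeff_ne_zero hn, hk]

theorem isChar_starProd {ν : Fin (m + 1) → ℂ} (hz : IsGroupLike F z) (hν : IsChar F ν) :
    IsChar F (starProd F z ν) := by
  refine ⟨?_, fun i j => ?_, fun i => ?_, fun i => ?_⟩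
  · simp [starProd, hz.1.1, hν.1, F.d_one]
  · have hi := F.d_ofReal_ne_zero i
    have hj := F.d_ofReal_ne_zero j
    calc starProd F z ν i * starProd F z ν j
        = z i * z j / (F.d i * F.d j) * (ν i * ν j) := by simp only [starProd]; ring
      _ = ∑ l, (F.N i j l : ℂ) * starProd F z ν l := by
        rw [hν.2.1, mul_sum]
        refine sum_congr rfl fun l _ => ?_
        by_cases hN : F.N i j l = 0
        · simp [hN]
        · have hl := F.d_ofReal_ne_zero l
          simp only [starProd]
          field_simp
          linear_combination -ν l * hz.mul_d_eq_of_N_ne_zero hN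
  · simp [starProd, F.d_dual, hz.1.2.2.1, hν.2.2.1]
  · rw [starProd, norm_div, norm_mul, hz.norm_eq_s19, Complex.norm_real,
      Real.norm_of_nonneg (F.d_pos i).le, mul_div_cancel_left₀ _ (F.d_pos i).ne']
    exact hν.2.2.2 i

theorem normSq_starProd (hz : IsGroupLike F z) (ν : Fin (m + 1) → ℂ) (i : Fin (m + 1)) :
    Complex.normSq (starProd F z ν i) = Complex.normSq (ν i) := by
  rw [starProd, mul_div_right_comm, map_mul, Complex.normSq_eq_norm_sq (z i / _),
    hz.norm_div_d, one_pow, one_mul]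

end IsGroupLike

section CharacterTable

variable {ι : Type*} [Fintype ι] {μ : ι → ι → ℂ}

theorem normSq_div_sum_normSq_comm {dims : ι → ℂ} {S : ι → ι → ℂ} {D : ℂ}
    (hS : ∀ i j, S i j = S j i) (hdims : ∀ i, dims i ≠ 0) (hμ : ∀ i j, μ j i = S i j / dims j)
    (hD : ∀ j, ((∑ i, Complex.normSq (μ j i) : ℝ) : ℂ) * dims j ^ 2 = D) (i j : ι) :
    Complex.normSq (μ i j) / ∑ l, Complex.normSq (μ i l)
      = Complex.normSq (μ j i) / ∑ l, Complex.normSq (μ j l) := by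
  have key : ∀ i j, Complex.normSq (μ i j) / ∑ l, Complex.normSq (μ i l)
      = Complex.normSq (S j i) / ‖D‖ := by
    intro i j
    have hi : ‖dims i‖ ≠ 0 := norm_ne_zero_iff.2 (hdims i)
    have hn : ∑ l, Complex.normSq (μ i l) = ‖D‖ / ‖dims i‖ ^ 2 := by
      rw [← hD i, norm_mul, norm_pow, Complex.norm_real,
        Real.norm_of_nonneg (sum_nonneg fun l _ => Complex.normSq_nonneg _)]
      field_simp
    rw [hn, div_div_eq_mul_div, hμ, map_div₀, Complex.normSq_eq_norm_sq (dims i)]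
    field_simp
  rw [key, key, hS]

theorem sum_normSq_div_sum_normSq_eq_one
    (hcomm : ∀ i j, Complex.normSq (μ i j) / ∑ l, Complex.normSq (μ i l)
      = Complex.normSq (μ j i) / ∑ l, Complex.normSq (μ j l))
    (k : ι) (hk : ∑ l, Complex.normSq (μ k l) ≠ 0) :
    ∑ j, Complex.normSq (μ j k) / ∑ l, Complex.normSq (μ j l) = 1 := by
  simp_rw [← hcomm k, ← sum_div, div_self hk]

end CharacterTable

section Orbits

variable {m : ℕ} (F : FusionData m) (μ : Fin (m + 1) → Fin (m + 1) → ℂ)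

open scoped Classical in
noncomputable def groupLikeOrbit (t : Fin (m + 1)) : Finset (Fin (m + 1)) :=
  {j | ∃ z, IsGroupLike F z ∧ starProd F z (μ t) = μ j}

variable {F μ}

@[simp]
theorem mem_groupLikeOrbit {t j : Fin (m + 1)} :
    j ∈ groupLikeOrbit F μ t ↔ ∃ z, IsGroupLike F z ∧ starProd F z (μ t) = μ j := by
  simp [groupLikeOrbit]

theorem card_isGroupLike_eq_card_groupLikeOrbit [DecidablePred fun j => IsGroupLike F (μ j)]
    (hchar : ∀ j, IsChar F (μ j)) (hinj : Function.Injective μ)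
    (hall : ∀ ν, IsChar F ν → ∃ j, μ j = ν) {k : Fin (m + 1)}
    (hgen : ∀ i, ∃ n, powCoeff F k n i ≠ 0) {t : Fin (m + 1)} (ht : μ t k ≠ 0) :
    #{j | IsGroupLike F (μ j)} = #(groupLikeOrbit F μ t) := by
  have hidx : ∀ a, IsGroupLike F (μ a) →
      μ (Function.invFun μ (starProd F (μ a) (μ t))) = starProd F (μ a) (μ t) :=
    fun a ha => Function.invFun_eq (hall _ (ha.isChar_starProd (hchar t)))
  refine card_nbij (fun a => Function.invFun μ (starProd F (μ a) (μ t)))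
    (fun a ha => ?_) (fun a₁ ha₁ a₂ ha₂ h => ?_) (fun j hj => ?_)
  · simp only [coe_filter, mem_univ, true_and, Set.mem_ofPred_eq, mem_coe,
      mem_groupLikeOrbit] at ha ⊢
    exact ⟨μ a, ha, (hidx a ha).symm⟩
  · simp only [coe_filter, mem_univ, true_and, Set.mem_ofPred_eq] at ha₁ ha₂
    have hk := congrFun (hidx a₁ ha₁ ▸ hidx a₂ ha₂ ▸ congrArg μ h) k
    simp only [starProd, div_left_inj' (F.d_ofReal_ne_zero k), mul_left_inj' ht] at hk
    exact hinj (ha₁.eq_of_apply_eq ha₂ hgen hk)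
  · simp only [mem_coe, mem_groupLikeOrbit] at hj
    obtain ⟨z, hz, hzt⟩ := hj
    obtain ⟨a, rfl⟩ := hall z hz.1
    exact ⟨a, by simpa using hz, hinj (by rw [hidx a hz, hzt])⟩

theorem sum_eq_card_isGroupLike_nsmul_sum {M : Type*} [AddCommMonoid M]
    [DecidablePred fun j => IsGroupLike F (μ j)] (hchar : ∀ j, IsChar F (μ j))
    (hinj : Function.Injective μ) (hall : ∀ ν, IsChar F ν → ∃ j, μ j = ν) {k : Fin (m + 1)}
    (hgen : ∀ i, ∃ n, powCoeff F k n i ≠ 0) {f : (Fin (m + 1) → ℂ) → M}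
    (hf : ∀ z ν, IsGroupLike F z → f (starProd F z ν) = f ν) (hf₀ : ∀ ν, ν k = 0 → f ν = 0)
    (T : Finset (Fin (m + 1))) (hTnv : ∀ t ∈ T, μ t k ≠ 0)
    (hTrep : ∀ j, μ j k ≠ 0 →
      ∃! t, t ∈ T ∧ ∃ z, IsGroupLike F z ∧ starProd F z (μ t) = μ j) :
    ∑ j, f (μ j) = #{j | IsGroupLike F (μ j)} • ∑ t ∈ T, f (μ t) := by
  classical
  have hne {t j} (ht : t ∈ T) (hj : j ∈ groupLikeOrbit F μ t) : μ j k ≠ 0 := by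
    obtain ⟨z, hz, hzt⟩ := mem_groupLikeOrbit.1 hj
    exact hzt ▸ hz.starProd_ne_zero (hTnv t ht)
  have hdisj : (T : Set (Fin (m + 1))).PairwiseDisjoint (groupLikeOrbit F μ) := by
    refine fun t₁ ht₁ t₂ ht₂ hne₁₂ => disjoint_left.2 fun j hj₁ hj₂ => hne₁₂ ?_
    exact (hTrep j (hne ht₁ hj₁)).unique ⟨ht₁, mem_groupLikeOrbit.1 hj₁⟩
      ⟨ht₂, mem_groupLikeOrbit.1 hj₂⟩
  have hcover : ∑ j ∈ T.biUnion (groupLikeOrbit F μ), f (μ j) = ∑ j, f (μ j) := by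
    refine sum_subset (subset_univ _) fun j _ hj => hf₀ _ ?_
    by_contra hjk
    obtain ⟨t, ⟨ht, hjt⟩, -⟩ := hTrep j hjk
    exact hj (mem_biUnion.2 ⟨t, ht, mem_groupLikeOrbit.2 hjt⟩)
  rw [← hcover, sum_biUnion hdisj, smul_sum]
  refine sum_congr rfl fun t ht => ?_
  have hconst : ∀ j ∈ groupLikeOrbit F μ t, f (μ j) = f (μ t) := fun j hj => by
    obtain ⟨z, hz, hzt⟩ := mem_groupLikeOrbit.1 hj
    rw [← hzt, hf z _ hz]
  rw [sum_congr rfl hconst, sum_const,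
    card_isGroupLike_eq_card_groupLikeOrbit hchar hinj hall hgen (hTnv t ht)]

end Orbits

theorem modular_divisibility_general {m : ℕ} (F : FusionData m)
    (μ : Fin (m + 1) → Fin (m + 1) → ℂ)
    (hchar : ∀ j, IsChar F (μ j)) (hinj : Function.Injective μ)
    (hall : ∀ ν, IsChar F ν → ∃ j, μ j = ν)
    (dims : Fin (m + 1) → ℂ) (hdne : ∀ i, dims i ≠ 0)
    (Smat : Fin (m + 1) → Fin (m + 1) → ℂ)
    (hSsymm : ∀ i j, Smat i j = Smat j i)
    (hEval : ∀ i j, μ j i = Smat i j / dims j)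
    (hclassdim : ∀ j, ((∑ i, Complex.normSq (μ j i) : ℝ) : ℂ) * dims j ^ 2
      = ∑ i, dims i ^ 2)
    (k : Fin (m + 1)) (hgen : ∀ i, ∃ n, powCoeff F k n i ≠ 0)
    (hSint : ∀ i, IsIntegral ℤ (Smat k i / dims k))
    (T : Finset (Fin (m + 1))) (hTnv : ∀ t ∈ T, μ t k ≠ 0)
    (hTrep : ∀ j, μ j k ≠ 0 →
      ∃! t, t ∈ T ∧ ∃ z, IsGroupLike F z ∧ starProd F z (μ t) = μ j) :
    ((∑ i, dims i ^ 2) /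
        ((Nat.card {j : Fin (m + 1) // IsGroupLike F (μ j)} : ℂ) * dims k ^ 2)
      = ∑ t ∈ T, (Smat k t / dims k) * starRingEnd ℂ (Smat k t / dims k)) ∧
    IsIntegral ℤ ((∑ i, dims i ^ 2) /
      ((Nat.card {j : Fin (m + 1) // IsGroupLike F (μ j)} : ℂ) * dims k ^ 2)) := by
  classical
  set n : Fin (m + 1) → ℝ := fun j => ∑ i, Complex.normSq (μ j i)
  set f : (Fin (m + 1) → ℂ) → ℝ := fun ν => Complex.normSq (ν k) / ∑ i, Complex.normSq (ν i)
  have hcomm := normSq_div_sum_normSq_comm hSsymm hdne hEval hclassdim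
  have hnk : n k ≠ 0 := (Finset.sum_pos' (fun i _ => Complex.normSq_nonneg _)
    ⟨0, mem_univ 0, by simp [(hchar k).1]⟩).ne'
  have horbits : (#{j | IsGroupLike F (μ j)} : ℝ) * ∑ t ∈ T, f (μ t) = 1 := by
    rw [← nsmul_eq_mul, ← sum_eq_card_isGroupLike_nsmul_sum hchar hinj hall hgen
      (fun z ν hz => by simp only [f, hz.normSq_starProd]) (fun ν h => by simp [f, h]) T hTnv
      hTrep]
    exact sum_normSq_div_sum_normSq_eq_one hcomm k hnk
  have hterm : ∀ t, Smat k t / dims k * starRingEnd ℂ (Smat k t / dims k)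
      = ((n k * f (μ t) : ℝ) : ℂ) := by
    intro t
    rw [hSsymm, ← hEval, Complex.mul_conj, ← div_mul_cancel₀ (Complex.normSq (μ k t)) hnk,
      hcomm k t, mul_comm]
  have hEq : (∑ i, dims i ^ 2) /
      ((Nat.card {j : Fin (m + 1) // IsGroupLike F (μ j)} : ℂ) * dims k ^ 2)
      = ∑ t ∈ T, (Smat k t / dims k) * starRingEnd ℂ (Smat k t / dims k) := by
    rw [sum_congr rfl fun t _ => hterm t, ← Complex.ofReal_sum, ← mul_sum,
      eq_inv_of_mul_eq_one_right horbits, ← hclassdim k, Nat.card_eq_fintype_card,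
      Fintype.card_subtype, mul_div_mul_right _ _ (pow_ne_zero 2 (hdne k)),
      Complex.ofReal_mul, Complex.ofReal_inv, Complex.ofReal_natCast, div_eq_mul_inv]
  exact ⟨hEq, hEq ▸ IsIntegral.sum _ fun t _ =>
    (hSint t).mul ((hSint t).map (starRingEnd ℂ).toIntAlgHom)⟩

/-- A modular fusion category generated by a simple object `X = X_k`, modelled
by its Grothendieck ring `F`, quantum dimensions `dims`, and symmetric
`S`-matrix, with characters `μ_j([X_i]) = S_{ij}/d_j` and
`dim C^j = d_j² = dim C / n_j`.  Then the orbit-sum identity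
`dim C/|G| = ∑ d_i² |μ_i([X])|²` over non-vanishing orbit representatives
transforms into `dim C/(|G| d_k²) = ∑ |μ_X([X_i])|²` with
`μ_X([X_i]) = S_{ki}/d_k` algebraic integers; hence
`dim C/(|U(C)|·dim(X)²)` is an algebraic integer. -/
theorem modular_divisibility {m : ℕ} (F : FusionData m)
    (μ : Fin (m + 1) → Fin (m + 1) → ℂ)
    (hchar : ∀ j, IsChar F (μ j)) (hinj : Function.Injective μ)
    (hall : ∀ ν, IsChar F ν → ∃ j, μ j = ν)
    (h0 : μ 0 = fun i => (F.d i : ℂ))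
    (dims : Fin (m + 1) → ℂ) (hd0 : dims 0 = 1)
    (hdmul : ∀ i j, dims i * dims j = ∑ k, (F.N i j k : ℂ) * dims k)
    (hddual : ∀ i, dims (F.dual i) = dims i) (hdne : ∀ i, dims i ≠ 0)
    (Smat : Fin (m + 1) → Fin (m + 1) → ℂ)
    (hSsymm : ∀ i j, Smat i j = Smat j i)
    (hEval : ∀ i j, μ j i = Smat i j / dims j)
    (hclassdim : ∀ j, ((∑ i, Complex.normSq (μ j i) : ℝ) : ℂ) * dims j ^ 2
      = ∑ i, dims i ^ 2)
    (k : Fin (m + 1)) (hgen : ∀ i, ∃ n, powCoeff F k n i ≠ 0)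
    (hSint : ∀ i, IsIntegral ℤ (Smat k i / dims k))
    (T : Finset (Fin (m + 1))) (hTnv : ∀ t ∈ T, μ t k ≠ 0)
    (hTrep : ∀ j, μ j k ≠ 0 →
      ∃! t, t ∈ T ∧ ∃ z, IsGroupLike F z ∧ starProd F z (μ t) = μ j) :
    ((∑ i, dims i ^ 2) /
        ((Nat.card {j : Fin (m + 1) // IsGroupLike F (μ j)} : ℂ) * dims k ^ 2)
      = ∑ t ∈ T, (Smat k t / dims k) * starRingEnd ℂ (Smat k t / dims k)) ∧
    IsIntegral ℤ ((∑ i, dims i ^ 2) /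
      ((Nat.card {j : Fin (m + 1) // IsGroupLike F (μ j)} : ℂ) * dims k ^ 2)) :=
  modular_divisibility_general F μ hchar hinj hall dims hdne Smat hSsymm hEval hclassdim k hgen
    hSint T hTnv hTrep
end
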